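/- Let m be a positive integer and β > 0. Let H and I be independent nonnegative real random variables on a probability space, where H has probability density f_H(h) = m^m h^{m−1} exp(−m h)/(m−1)! on h > 0 (Gamma distribution with integer shape m and rate m). Let L(s) = E[exp(−s I)] denote the Laplace transform of I. Then ℙ( H > β I ) = Σ_{k=0}^{m−1} ( (−m β)^k / k! ) · L^{(k)}(m β), where L^{(k)} denotes the k-th derivative of L. -/

import Mathlib

/-!
Conditionally on `I`, the event `H > βI` has probability `S(βI)`, where
`S(t) = e^{-mt} ∑_{k<m} (mt)^k/k!` is the survival function of the Erlang law of `H`: it is the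
antiderivative of minus the density that vanishes at infinity. Expanding `S(βI)` turns `ℙ(H > βI)`
into a finite combination of the moments `E[(-I)^k e^{-mβI}]`, and these are the derivatives
`L^{(k)}(mβ)`: for `s > 0` the factor `e^{-sI}` dominates every power of `I ≥ 0` uniformly near
`s`, so one may differentiate under the integral sign.
-/

open MeasureTheory Real ProbabilityTheory Filter Set Topology
open scoped Nat

lemma pow_mul_exp_neg_mul_le {c x : ℝ} (hc : 0 < c) (hx : 0 ≤ x) (n : ℕ) :
    x ^ n * exp (-(c * x)) ≤ n ! / c ^ n := by
  have key := Real.pow_div_factorial_le_exp _ (mul_nonneg hc.le hx) n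
  rw [div_le_iff₀ (by positivity), mul_pow] at key
  rw [le_div_iff₀ (by positivity), exp_neg]
  calc x ^ n * (exp (c * x))⁻¹ * c ^ n = c ^ n * x ^ n * (exp (c * x))⁻¹ := by ring
    _ ≤ exp (c * x) * n ! * (exp (c * x))⁻¹ := by gcongr
    _ = n ! := by field_simp

lemma hasDerivAt_sum_range_pow_div_factorial (n : ℕ) (x : ℝ) :
    HasDerivAt (fun x : ℝ => ∑ k ∈ Finset.range (n + 1), x ^ k / k !)
      (∑ k ∈ Finset.range n, x ^ k / k !) x := by
  induction n with
  | zero => simpa using hasDerivAt_const x (1 : ℝ)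
  | succ n ih =>
    have hterm : HasDerivAt (fun x : ℝ => x ^ (n + 1) / (n + 1)!) (x ^ n / n !) x := by
      refine ((hasDerivAt_pow (n + 1) x).div_const _).congr_deriv ?_
      rw [Nat.factorial_succ]
      push_cast
      field_simp
    rw [Finset.sum_range_succ (fun k => x ^ k / (k ! : ℝ)) n]
    simp_rw [Finset.sum_range_succ _ (n + 1)]
    exact ih.fun_add hterm

noncomputable def erlangDensity (m : ℕ) (c h : ℝ) : ℝ :=
  c ^ m * h ^ (m - 1) * exp (-c * h) / (m - 1)!

noncomputable def erlangSurvival (m : ℕ) (c t : ℝ) : ℝ :=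
  exp (-c * t) * ∑ k ∈ Finset.range m, (c * t) ^ k / k !

lemma erlangSurvival_mul (m : ℕ) (c β t : ℝ) :
    erlangSurvival m c (β * t) = erlangSurvival m (c * β) t := by
  simp only [erlangSurvival, neg_mul, mul_assoc]

lemma erlangSurvival_eq_sum (m : ℕ) (s x : ℝ) :
    erlangSurvival m s x
      = ∑ k ∈ Finset.range m, (-s) ^ k / k ! * ((-x) ^ k * exp (-(s * x))) := by
  rw [erlangSurvival, neg_mul, Finset.mul_sum]
  refine Finset.sum_congr rfl fun k _ => ?_
  rw [div_mul_eq_mul_div, ← mul_assoc, ← mul_pow, neg_mul_neg]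
  ring

section Erlang

variable {m : ℕ} {c : ℝ}

lemma hasDerivAt_erlangSurvival (hm : 0 < m) (t : ℝ) :
    HasDerivAt (erlangSurvival m c) (-erlangDensity m c t) t := by
  obtain ⟨n, rfl⟩ : ∃ n, m = n + 1 := ⟨m - 1, by omega⟩
  have hexp := ((hasDerivAt_id' t).const_mul (-c)).exp
  have hsum := (hasDerivAt_sum_range_pow_div_factorial n (c * t)).comp t
    ((hasDerivAt_id' t).const_mul c)
  refine (hexp.mul hsum).congr_deriv ?_
  simp only [erlangDensity, Function.comp_apply, Finset.sum_range_succ, add_tsub_cancel_right,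
    mul_pow]
  ring

lemma tendsto_erlangSurvival_atTop (hc : 0 < c) :
    Tendsto (erlangSurvival m c) atTop (𝓝 0) := by
  have hlim : Tendsto (fun x => ∑ k ∈ Finset.range m, x ^ k * exp (-x) / k !) atTop (𝓝 0) := by
    simpa using tendsto_finsetSum (Finset.range m) fun k _ =>
      (tendsto_pow_mul_exp_neg_atTop_nhds_zero k).div_const (k ! : ℝ)
  refine (hlim.comp (tendsto_id.const_mul_atTop hc)).congr fun t => ?_
  simp only [Function.comp_apply, id, erlangSurvival, Finset.mul_sum, neg_mul]
  congr! 1 with k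
  ring

lemma erlangDensity_nonneg (hc : 0 ≤ c) {h : ℝ} (hh : 0 ≤ h) : 0 ≤ erlangDensity m c h := by
  unfold erlangDensity
  positivity

lemma erlangSurvival_nonneg (hc : 0 ≤ c) {t : ℝ} (ht : 0 ≤ t) : 0 ≤ erlangSurvival m c t := by
  unfold erlangSurvival
  positivity

lemma withDensity_erlangDensity_Ioi {t : ℝ} (hm : 0 < m) (hc : 0 < c) (ht : 0 ≤ t) :
    volume.withDensity (fun h => ENNReal.ofReal (if 0 < h then erlangDensity m c h else 0))
      (Ioi t) = ENNReal.ofReal (erlangSurvival m c t) := by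
  have hpos : ∀ h ∈ Ioi t, 0 < h := fun h hh => ht.trans_lt hh
  have hnonneg : ∀ h ∈ Ioi t, 0 ≤ erlangDensity m c h :=
    fun h hh => erlangDensity_nonneg hc.le (hpos h hh).le
  have hderiv : ∀ h ∈ Ici t, HasDerivAt (-erlangSurvival m c) (erlangDensity m c h) h :=
    fun h _ => (hasDerivAt_erlangSurvival hm h).neg.congr_deriv (neg_neg _)
  have hlim : Tendsto (-erlangSurvival m c) atTop (𝓝 0) := by
    rw [← neg_zero]
    exact (tendsto_erlangSurvival_atTop hc).neg
  rw [withDensity_apply _ measurableSet_Ioi,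
    setLIntegral_congr_fun measurableSet_Ioi fun h hh => by rw [if_pos (hpos h hh)],
    ← ofReal_integral_eq_lintegral_ofReal (integrableOn_Ioi_deriv_of_nonneg' hderiv hnonneg hlim)
      ((ae_restrict_mem measurableSet_Ioi).mono hnonneg),
    integral_Ioi_of_hasDerivAt_of_nonneg' hderiv hnonneg hlim, Pi.neg_apply, zero_sub, neg_neg]

end Erlang

lemma ProbabilityTheory.IndepFun.measure_lt_eq_lintegral {Ω α : Type*} [MeasurableSpace Ω]
    [MeasurableSpace α] {P : Measure Ω} [IsFiniteMeasure P] {X : Ω → ℝ} {Y : Ω → α}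
    (hX : Measurable X) (hY : Measurable Y) (hXY : IndepFun X Y P) {f : α → ℝ} (hf : Measurable f) :
    P {ω | f (Y ω) < X ω} = ∫⁻ y, P.map X (Ioi (f y)) ∂(P.map Y) := by
  have hs : MeasurableSet {p : ℝ × α | f p.2 < p.1} :=
    measurableSet_lt (hf.comp measurable_snd) measurable_fst
  calc P {ω | f (Y ω) < X ω} = P.map (fun ω => (X ω, Y ω)) {p | f p.2 < p.1} :=
        (Measure.map_apply (hX.prodMk hY) hs).symm
    _ = (P.map X).prod (P.map Y) {p | f p.2 < p.1} := by
        rw [hXY.map_prod_eq_prod_map_map hX.aemeasurable hY.aemeasurable]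
    _ = _ := Measure.prod_apply_symm hs

section LaplaceTransform

variable {Ω : Type*} [MeasurableSpace Ω] {P : Measure Ω} [IsFiniteMeasure P] {I : Ω → ℝ}

lemma integrable_neg_pow_mul_exp_neg_mul (hI : AEMeasurable I P) (hI0 : ∀ᵐ ω ∂P, 0 ≤ I ω)
    {s : ℝ} (hs : 0 < s) (n : ℕ) :
    Integrable (fun ω => (-I ω) ^ n * exp (-(s * I ω))) P := by
  refine Integrable.mono' (integrable_const ((n ! : ℝ) / s ^ n))
    (by fun_prop : AEMeasurable _ P).aestronglyMeasurable ?_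
  filter_upwards [hI0] with ω hω
  rw [norm_mul, norm_pow, norm_neg, norm_of_nonneg hω, norm_of_nonneg (exp_pos _).le]
  exact pow_mul_exp_neg_mul_le hs hω n

lemma hasDerivAt_integral_neg_pow_mul_exp_neg_mul (hI : AEMeasurable I P)
    (hI0 : ∀ᵐ ω ∂P, 0 ≤ I ω) (k : ℕ) {s : ℝ} (hs : 0 < s) :
    HasDerivAt (fun u => ∫ ω, (-I ω) ^ k * exp (-(u * I ω)) ∂P)
      (∫ ω, (-I ω) ^ (k + 1) * exp (-(s * I ω)) ∂P) s := by
  refine (hasDerivAt_integral_of_dominated_loc_of_deriv_le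
    (F' := fun u ω => (-I ω) ^ (k + 1) * exp (-(u * I ω)))
    (Metric.ball_mem_nhds s (half_pos hs))
    (Eventually.of_forall fun u => (by fun_prop : AEMeasurable _ P).aestronglyMeasurable)
    (integrable_neg_pow_mul_exp_neg_mul hI hI0 hs k)
    (by fun_prop : AEMeasurable _ P).aestronglyMeasurable ?_
    (integrable_const (((k + 1)! : ℝ) / (s / 2) ^ (k + 1))) ?_).2
  · filter_upwards [hI0] with ω hω u hu
    have hu : s / 2 ≤ u := by
      rw [Metric.mem_ball, Real.dist_eq] at hu
      linarith [(abs_lt.1 hu).1]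
    calc ‖(-I ω) ^ (k + 1) * exp (-(u * I ω))‖ = I ω ^ (k + 1) * exp (-(u * I ω)) := by
          rw [norm_mul, norm_pow, norm_neg, norm_of_nonneg hω, norm_of_nonneg (exp_pos _).le]
      _ ≤ I ω ^ (k + 1) * exp (-(s / 2 * I ω)) := by gcongr
      _ ≤ ((k + 1)! : ℝ) / (s / 2) ^ (k + 1) := pow_mul_exp_neg_mul_le (half_pos hs) hω _
  · refine ae_of_all _ fun ω u _ => ?_
    exact ((hasDerivAt_mul_const (I ω)).fun_neg.exp.const_mul ((-I ω) ^ k)).congr_deriv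
      (by ring)

lemma iteratedDeriv_integral_exp_neg_mul (hI : AEMeasurable I P) (hI0 : ∀ᵐ ω ∂P, 0 ≤ I ω)
    (k : ℕ) {s : ℝ} (hs : 0 < s) :
    iteratedDeriv k (fun u => ∫ ω, exp (-(u * I ω)) ∂P) s
      = ∫ ω, (-I ω) ^ k * exp (-(s * I ω)) ∂P := by
  induction k generalizing s with
  | zero => simp
  | succ k ih =>
    have hk : iteratedDeriv k (fun u => ∫ ω, exp (-(u * I ω)) ∂P)
        =ᶠ[𝓝 s] fun u => ∫ ω, (-I ω) ^ k * exp (-(u * I ω)) ∂P := by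
      filter_upwards [Ioi_mem_nhds hs] with u hu using ih hu
    rw [iteratedDeriv_succ, hk.deriv_eq]
    exact (hasDerivAt_integral_neg_pow_mul_exp_neg_mul hI hI0 k hs).deriv

lemma integrable_erlangSurvival_comp (m : ℕ) (hI : AEMeasurable I P) (hI0 : ∀ᵐ ω ∂P, 0 ≤ I ω)
    {s : ℝ} (hs : 0 < s) : Integrable (fun ω => erlangSurvival m s (I ω)) P := by
  simp_rw [erlangSurvival_eq_sum]
  exact integrable_finsetSum _ fun k _ =>
    (integrable_neg_pow_mul_exp_neg_mul hI hI0 hs k).const_mul _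

lemma integral_erlangSurvival_comp (m : ℕ) (hI : AEMeasurable I P) (hI0 : ∀ᵐ ω ∂P, 0 ≤ I ω)
    {s : ℝ} (hs : 0 < s) :
    ∫ ω, erlangSurvival m s (I ω) ∂P = ∑ k ∈ Finset.range m,
      (-s) ^ k / k ! * iteratedDeriv k (fun u => ∫ ω, exp (-(u * I ω)) ∂P) s := by
  simp_rw [erlangSurvival_eq_sum, iteratedDeriv_integral_exp_neg_mul hI hI0 _ hs,
    ← integral_const_mul]
  exact integral_finsetSum _ fun k _ =>
    (integrable_neg_pow_mul_exp_neg_mul hI hI0 hs k).const_mul _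

end LaplaceTransform

theorem coverage_prob_gamma_fading {Ω : Type*} [MeasurableSpace Ω]
    (P : Measure Ω) [IsProbabilityMeasure P]
    (H I : Ω → ℝ) (hH : Measurable H) (hI : Measurable I)
    (hindep : IndepFun H I P)
    (hI_nonneg : ∀ ω, 0 ≤ I ω)
    (m : ℕ) (hm : 0 < m) (β : ℝ) (hβ : 0 < β)
    (hH_pdf : Measure.map H P = volume.withDensity (fun h : ℝ =>
      ENNReal.ofReal (if 0 < h then
        (m : ℝ) ^ m * h ^ (m - 1) * Real.exp (-(m : ℝ) * h) / (m - 1).factorial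
      else 0))) :
    P {ω | β * I ω < H ω}
      = ENNReal.ofReal (∑ k ∈ Finset.range m,
          ((-(m : ℝ) * β) ^ k / k.factorial) *
            iteratedDeriv k (fun s : ℝ => ∫ ω, Real.exp (-(s * I ω)) ∂P)
              ((m : ℝ) * β)) := by
  have hmβ : 0 < (m : ℝ) * β := by positivity
  have hI0 : ∀ᵐ ω ∂P, 0 ≤ I ω := ae_of_all _ hI_nonneg
  have htail : ∀ᵐ i ∂P.map I,
      P.map H (Ioi (β * i)) = ENNReal.ofReal (erlangSurvival m (m * β) i) := by
    filter_upwards [(ae_map_iff hI.aemeasurable measurableSet_Ici).2 hI0] with i hi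
    rw [hH_pdf, ← erlangSurvival_mul]
    exact withDensity_erlangDensity_Ioi hm (Nat.cast_pos.2 hm) (mul_nonneg hβ.le hi)
  have hnonneg : ∀ᵐ ω ∂P, 0 ≤ erlangSurvival m (m * β) (I ω) := by
    filter_upwards [hI0] with ω hω using erlangSurvival_nonneg hmβ.le hω
  calc P {ω | β * I ω < H ω}
      = ∫⁻ i, P.map H (Ioi (β * i)) ∂P.map I :=
        hindep.measure_lt_eq_lintegral hH hI (f := fun i => β * i) (by fun_prop)
    _ = ∫⁻ ω, ENNReal.ofReal (erlangSurvival m (m * β) (I ω)) ∂P := by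
        rw [lintegral_congr_ae htail, lintegral_map (by unfold erlangSurvival; fun_prop) hI]
    _ = _ := by
        rw [← ofReal_integral_eq_lintegral_ofReal
          (integrable_erlangSurvival_comp m hI.aemeasurable hI0 hmβ) hnonneg,
          integral_erlangSurvival_comp m hI.aemeasurable hI0 hmβ, neg_mul]
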